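/- arXiv:2012.11039 — 2 statements merged into one kernel-verified Lean document; each statement's English description precedes it below -/
import Mathlib

section
/- Let 𝒱 = {v₁, …, v_N} ⊂ ℝ^d be a finite set. If the supremum of the Lebesgue volume of ⋂_{v∈𝒱} {p : ⟨p,v⟩ ≤ c_v} over all (c_v) ∈ ℝ^𝒱 with ∑_v c_v = 1 is finite and attained, then Span(𝒱) = ℝ^d and ∑_{v∈𝒱} v = 0. -/
/-!
If `𝒱` does not span, a nonzero vector orthogonal to `𝒱` translates every polyhedron
`Rset 𝒱 c` into itself. The polyhedron for `c ≡ 1 / #𝒱` contains a ball around `0`, hence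
infinitely many disjoint translates of it, so its volume is infinite, contradicting the finite
maximum.

If `s = ∑ v ≠ 0`, the map `p ↦ 2 p + q` with `⟪q, s⟫ = -1` carries the maximiser `Rset 𝒱 c`
onto the polyhedron of `2 c + ⟪q, ·⟫`, which is again admissible and has `2 ^ d` times the
volume.
-/

open MeasureTheory
open scoped RealInnerProductSpace

/-- The polyhedron `⋂_{v ∈ 𝒱} {p : ⟨p,v⟩ ≤ c v}`. -/
def Rset {d : ℕ} (𝒱 : Finset (EuclideanSpace ℝ (Fin d)))
    (c : EuclideanSpace ℝ (Fin d) → ℝ) : Set (EuclideanSpace ℝ (Fin d)) :=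
  {p | ∀ v ∈ 𝒱, ⟪p, v⟫ ≤ c v}

open Finset Metric Pointwise

theorem measure_eq_top_of_mem_nhds_of_add_smul_mem {E : Type*} [NormedAddCommGroup E]
    [NormedSpace ℝ E] [MeasurableSpace E] [BorelSpace E] [FiniteDimensional ℝ E]
    (μ : Measure E) [μ.IsAddHaarMeasure] {s : Set E} {x u : E} (hx : s ∈ nhds x) (hu : u ≠ 0)
    (hs : ∀ p ∈ s, ∀ t : ℝ, p + t • u ∈ s) : μ s = ⊤ := by
  obtain ⟨r, hr, hball⟩ := Metric.mem_nhds_iff.mp hx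
  set w : E := (2 * r / ‖u‖) • u
  have hw : ‖w‖ = 2 * r := by
    rw [norm_smul, Real.norm_of_nonneg (by positivity),
      div_mul_cancel₀ _ (norm_ne_zero_iff.mpr hu)]
  have hsub : ∀ n : ℕ, ball (x + (n : ℝ) • w) r ⊆ s := fun n y hy => by
    have hy' : y - (n : ℝ) • w ∈ s := hball (by
      rwa [mem_ball, dist_eq_norm, sub_sub, add_comm, ← dist_eq_norm])
    simpa [w, smul_smul] using hs _ hy' (n * (2 * r / ‖u‖))
  have hdisj : Pairwise (Function.onFun Disjoint fun n : ℕ => ball (x + (n : ℝ) • w) r) := by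
    intro m n hmn
    apply ball_disjoint_ball
    have h1 : (1 : ℝ) ≤ |(m : ℝ) - n| := by
      exact_mod_cast Int.one_le_abs (sub_ne_zero.mpr (Nat.cast_injective.ne hmn : (m : ℤ) ≠ n))
    rw [dist_add_left, dist_eq_norm, ← sub_smul, norm_smul, Real.norm_eq_abs, hw]
    nlinarith
  have hunion : μ (⋃ n : ℕ, ball (x + (n : ℝ) • w) r) = ⊤ := by
    rw [measure_iUnion hdisj fun _ => measurableSet_ball]
    simp only [Measure.addHaar_ball_center μ _ r]
    exact ENNReal.tsum_const_eq_top_of_ne_zero (measure_ball_pos μ 0 hr).ne'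
  exact top_le_iff.mp (hunion ▸ measure_mono (Set.iUnion_subset hsub))

section Rset

variable {d : ℕ} {𝒱 : Finset (EuclideanSpace ℝ (Fin d))} {c : EuclideanSpace ℝ (Fin d) → ℝ}

theorem Rset_mem_nhds_zero (hc : ∀ v ∈ 𝒱, 0 < c v) : Rset 𝒱 c ∈ nhds 0 := by
  have hopen : IsOpen {p : EuclideanSpace ℝ (Fin d) | ∀ v ∈ 𝒱, ⟪p, v⟫ < c v} := by
    simp only [Set.ofPred_forall]
    exact isOpen_biInter_finset fun v _ => isOpen_lt (by fun_prop) continuous_const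
  refine Filter.mem_of_superset (hopen.mem_nhds fun v hv => by simpa using hc v hv) ?_
  exact fun p hp v hv => (hp v hv).le

theorem add_smul_mem_Rset {p u : EuclideanSpace ℝ (Fin d)} (hp : p ∈ Rset 𝒱 c)
    (hu : ∀ v ∈ 𝒱, ⟪u, v⟫ = 0) (t : ℝ) : p + t • u ∈ Rset 𝒱 c := fun v hv => by
  simpa [inner_add_left, real_inner_smul_left, hu v hv] using hp v hv

theorem span_eq_top_of_volume_Rset_ne_top (hc : ∀ v ∈ 𝒱, 0 < c v)
    (hfin : volume (Rset 𝒱 c) ≠ ⊤) :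
    Submodule.span ℝ (𝒱 : Set (EuclideanSpace ℝ (Fin d))) = ⊤ := by
  by_contra hspan
  obtain ⟨u, hu, hu0⟩ := Submodule.exists_mem_ne_zero_of_ne_bot
    ((Submodule.orthogonal_eq_bot_iff).not.mpr hspan)
  have horth : ∀ v ∈ 𝒱, ⟪u, v⟫ = 0 := fun v hv =>
    Submodule.inner_left_of_mem_orthogonal (Submodule.subset_span hv) hu
  exact hfin <| measure_eq_top_of_mem_nhds_of_add_smul_mem volume (Rset_mem_nhds_zero hc) hu0
    fun p hp t => add_smul_mem_Rset hp horth t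

theorem Rset_mul_add_inner {a : ℝ} (ha : 0 < a) (q : EuclideanSpace ℝ (Fin d)) :
    Rset 𝒱 (fun v => a * c v + ⟪q, v⟫) = q +ᵥ a • Rset 𝒱 c := by
  ext p
  rw [Set.mem_vadd_set_iff_neg_vadd_mem, Set.mem_smul_set_iff_inv_smul_mem₀ ha.ne']
  simp only [Rset, Set.mem_ofPred_eq, vadd_eq_add, real_inner_smul_left, inner_add_left,
    inner_neg_left]
  refine forall₂_congr fun v _ => ?_
  rw [inv_mul_le_iff₀ ha]
  constructor <;> intro h <;> linarith

theorem volume_Rset_mul_add_inner {a : ℝ} (ha : 0 < a) (q : EuclideanSpace ℝ (Fin d)) :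
    volume (Rset 𝒱 (fun v => a * c v + ⟪q, v⟫)) =
      ENNReal.ofReal (a ^ d) * volume (Rset 𝒱 c) := by
  rw [Rset_mul_add_inner ha, measure_vadd, Measure.addHaar_smul, finrank_euclideanSpace_fin,
    abs_of_pos (by positivity)]

theorem sum_eq_zero_of_forall_volume_Rset_le (hc : ∑ v ∈ 𝒱, c v = 1)
    (hpos : 0 < volume (Rset 𝒱 c)) (hfin : volume (Rset 𝒱 c) ≠ ⊤)
    (hmax : ∀ c' : EuclideanSpace ℝ (Fin d) → ℝ, ∑ v ∈ 𝒱, c' v = 1 →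
      volume (Rset 𝒱 c') ≤ volume (Rset 𝒱 c)) :
    ∑ v ∈ 𝒱, v = 0 := by
  set s := ∑ v ∈ 𝒱, v
  by_contra hs
  have hd : d ≠ 0 := by
    have : Nontrivial (EuclideanSpace ℝ (Fin d)) := nontrivial_of_ne s 0 hs
    simpa using (Module.finrank_pos (R := ℝ) (M := EuclideanSpace ℝ (Fin d))).ne'
  set q := -(‖s‖ ^ 2)⁻¹ • s
  have hsum : ∑ v ∈ 𝒱, (2 * c v + ⟪q, v⟫) = 1 := by
    have hs2 : ‖s‖ ^ 2 ≠ 0 := by positivity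
    rw [sum_add_distrib, ← mul_sum, hc, ← inner_sum, real_inner_smul_left,
      real_inner_self_eq_norm_sq, neg_mul, inv_mul_cancel₀ hs2]
    norm_num
  have hle := hmax _ hsum
  rw [volume_Rset_mul_add_inner two_pos] at hle
  refine hle.not_gt ?_
  conv_lhs => rw [← one_mul (volume (Rset 𝒱 c))]
  exact ENNReal.mul_lt_mul_left hpos.ne' hfin
    (ENNReal.one_lt_ofReal.mpr (one_lt_pow₀ one_lt_two hd))

end Rset

/-- Lemma 3.1(1), necessity: if the supremum of the volume over the constraint
`∑ c_v = 1` is finite and attained, then `𝒱` spans `ℝ^d` and `∑_{v∈𝒱} v = 0`. -/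
theorem stmt3 {d : ℕ} (𝒱 : Finset (EuclideanSpace ℝ (Fin d)))
    (c : EuclideanSpace ℝ (Fin d) → ℝ) (hc : ∑ v ∈ 𝒱, c v = 1)
    (hfin : volume (Rset 𝒱 c) ≠ ⊤)
    (hmax : ∀ c' : EuclideanSpace ℝ (Fin d) → ℝ, ∑ v ∈ 𝒱, c' v = 1 →
      volume (Rset 𝒱 c') ≤ volume (Rset 𝒱 c)) :
    Submodule.span ℝ (𝒱 : Set (EuclideanSpace ℝ (Fin d))) = ⊤ ∧
      ∑ v ∈ 𝒱, v = 0 := by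
  have hcard : (0 : ℝ) < #𝒱 := by
    rcases 𝒱.eq_empty_or_nonempty with rfl | hne
    · simp at hc
    · exact_mod_cast hne.card_pos
  set c₀ : EuclideanSpace ℝ (Fin d) → ℝ := fun _ => (#𝒱 : ℝ)⁻¹
  have hc₀ : ∀ v ∈ 𝒱, 0 < c₀ v := fun _ _ => inv_pos.mpr hcard
  have hsum₀ : ∑ v ∈ 𝒱, c₀ v = 1 := by
    simp only [c₀, sum_const, nsmul_eq_mul]
    exact mul_inv_cancel₀ hcard.ne'
  have hle₀ := hmax c₀ hsum₀
  have hpos : 0 < volume (Rset 𝒱 c) :=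
    (Measure.measure_pos_of_mem_nhds volume (Rset_mem_nhds_zero hc₀)).trans_le hle₀
  exact ⟨span_eq_top_of_volume_Rset_ne_top hc₀ (ne_top_of_le_ne_top hfin hle₀),
    sum_eq_zero_of_forall_volume_Rset_le hc hpos hfin hmax⟩
end

section
/- Let 𝒱 ⊂ ℝ^d be finite with ∑_{v∈𝒱} v = b ≠ 0. Then for every competitor c with ∑_v c_v = 1 and vol(R_c) > 0 and every ε ∈ (0,1), there exists a translation w and coefficients c' with ∑_v c'_v = ε such that R_c + w = R_{c'}; consequently (1/ε)(R_c + w) is a competitor with volume ε^{-d} vol(R_c), and the supremum C_𝒱 is +∞. -/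
/-!
Translating `R_c` by `w` adds `⟨w, v⟩` to each coefficient, so it changes the total
coefficient by `⟨w, ∑ v⟩ = ⟨w, b⟩`; since `b ≠ 0`, a multiple of `b` brings the total
down to any `ε > 0` without changing the volume. Dilating by `ε⁻¹` then restores total
coefficient `1` and multiplies the volume by `ε^{-d}`, which is unbounded as `ε → 0`.
-/

open MeasureTheory
open scoped RealInnerProductSpace ENNReal Pointwise

section Rset

variable {d : ℕ} {𝒱 : Finset (EuclideanSpace ℝ (Fin d))}

theorem image_add_Rset (w : EuclideanSpace ℝ (Fin d)) (c : EuclideanSpace ℝ (Fin d) → ℝ) :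
    (w + ·) '' Rset 𝒱 c = Rset 𝒱 (fun v => c v + ⟪w, v⟫) := by
  ext p
  simp only [Set.mem_image, Rset, Set.mem_ofPred_eq]
  constructor
  · rintro ⟨q, hq, rfl⟩ v hv
    rw [inner_add_left]
    linarith [hq v hv]
  · intro hp
    refine ⟨p - w, fun v hv => ?_, add_sub_cancel w p⟩
    rw [inner_sub_left]
    linarith [hp v hv]

theorem image_smul_Rset {t : ℝ} (ht : 0 < t) (c : EuclideanSpace ℝ (Fin d) → ℝ) :
    (t • ·) '' Rset 𝒱 c = Rset 𝒱 (fun v => t * c v) := by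
  ext p
  simp only [Set.mem_image, Rset, Set.mem_ofPred_eq]
  constructor
  · rintro ⟨q, hq, rfl⟩ v hv
    rw [real_inner_smul_left]
    exact mul_le_mul_of_nonneg_left (hq v hv) ht.le
  · intro hp
    refine ⟨t⁻¹ • p, fun v hv => ?_, smul_inv_smul₀ ht.ne' p⟩
    rw [real_inner_smul_left, inv_mul_le_iff₀ ht]
    exact hp v hv

theorem exists_sum_add_inner_eq (h𝒱 : ∑ v ∈ 𝒱, v ≠ 0) (c : EuclideanSpace ℝ (Fin d) → ℝ)
    (s : ℝ) : ∃ w : EuclideanSpace ℝ (Fin d), ∑ v ∈ 𝒱, (c v + ⟪w, v⟫) = s := by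
  set b := ∑ v ∈ 𝒱, v
  have hbb : ⟪b, b⟫ ≠ 0 := inner_self_ne_zero.mpr h𝒱
  refine ⟨((s - ∑ v ∈ 𝒱, c v) / ⟪b, b⟫) • b, ?_⟩
  rw [Finset.sum_add_distrib, ← inner_sum, real_inner_smul_left, div_mul_cancel₀ _ hbb]
  ring

theorem volume_image_smul_Rset {ε : ℝ} (hε : 0 < ε) (c : EuclideanSpace ℝ (Fin d) → ℝ) :
    volume ((ε⁻¹ • ·) '' Rset 𝒱 c) = (ENNReal.ofReal ε)⁻¹ ^ d * volume (Rset 𝒱 c) := by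
  rw [Set.image_smul, Measure.addHaar_smul, finrank_euclideanSpace_fin,
    abs_of_pos (by positivity), ENNReal.ofReal_pow (inv_pos.mpr hε).le,
    ENNReal.ofReal_inv_of_pos hε]

theorem exists_translate_rescale_Rset (h𝒱 : ∑ v ∈ 𝒱, v ≠ 0)
    (c : EuclideanSpace ℝ (Fin d) → ℝ) {ε : ℝ} (hε : 0 < ε) :
    ∃ (w : EuclideanSpace ℝ (Fin d)) (c' : EuclideanSpace ℝ (Fin d) → ℝ),
      (∑ v ∈ 𝒱, c' v = ε) ∧ ((w + ·) '' Rset 𝒱 c = Rset 𝒱 c') ∧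
      ∃ c'' : EuclideanSpace ℝ (Fin d) → ℝ, (∑ v ∈ 𝒱, c'' v = 1) ∧
        ((ε⁻¹ • ·) '' Rset 𝒱 c' = Rset 𝒱 c'') ∧
        volume (Rset 𝒱 c'') = (ENNReal.ofReal ε)⁻¹ ^ d * volume (Rset 𝒱 c) := by
  obtain ⟨w, hw⟩ := exists_sum_add_inner_eq h𝒱 c ε
  have htranslate := image_add_Rset (𝒱 := 𝒱) w c
  have hdilate := image_smul_Rset (𝒱 := 𝒱) (inv_pos.mpr hε) (fun v => c v + ⟪w, v⟫)
  refine ⟨w, _, hw, htranslate, _, ?_, hdilate, ?_⟩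
  · rw [← Finset.mul_sum, hw, inv_mul_cancel₀ hε.ne']
  · rw [← hdilate, volume_image_smul_Rset hε, ← htranslate]
    exact congrArg _ (measure_vadd volume w (Rset 𝒱 c))

end Rset

theorem ENNReal.exists_lt_inv_ofReal_pow_mul {d : ℕ} (hd : d ≠ 0) {V M : ℝ≥0∞} (hV : V ≠ 0)
    (hM : M < ⊤) : ∃ ε : ℝ, 0 < ε ∧ ε < 1 ∧ M < (ENNReal.ofReal ε)⁻¹ ^ d * V := by
  have htop : ⨆ n : ℕ, (n : ℝ≥0∞) * V = ⊤ := by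
    rw [← ENNReal.iSup_mul, ENNReal.iSup_natCast, ENNReal.top_mul hV]
  obtain ⟨n, hn⟩ : ∃ n : ℕ, M < n * V := lt_iSup_iff.mp (htop ▸ hM)
  refine ⟨((n : ℝ) + 2)⁻¹, by positivity, inv_lt_one_of_one_lt₀ (by linarith), ?_⟩
  rw [ENNReal.ofReal_inv_of_pos (by positivity), inv_inv]
  refine hn.trans_le (mul_le_mul_left ?_ V)
  calc (n : ℝ≥0∞) = ENNReal.ofReal n := (ENNReal.ofReal_natCast n).symm
    _ ≤ ENNReal.ofReal ((n : ℝ) + 2) := ENNReal.ofReal_le_ofReal (by linarith)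
    _ ≤ ENNReal.ofReal ((n : ℝ) + 2) ^ d :=
      le_self_pow₀ (ENNReal.one_le_ofReal.mpr (by linarith)) hd

/-- Lemma 3.1(1), sufficiency direction of non-existence: if `∑_{v∈𝒱} v = b ≠ 0`,
then any positive-volume competitor can be translated to one with total
coefficient `ε`, whose rescaling by `1/ε` is a competitor of volume
`ε^{-d}` times bigger; consequently the supremum is `+∞` (as soon as some
competitor has positive volume). -/
theorem stmt5 {d : ℕ} (𝒱 : Finset (EuclideanSpace ℝ (Fin d)))
    (b : EuclideanSpace ℝ (Fin d)) (hb : ∑ v ∈ 𝒱, v = b) (hb0 : b ≠ 0) :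
    (∀ c : EuclideanSpace ℝ (Fin d) → ℝ, ∑ v ∈ 𝒱, c v = 1 →
      0 < volume (Rset 𝒱 c) → ∀ ε : ℝ, 0 < ε → ε < 1 →
        ∃ (w : EuclideanSpace ℝ (Fin d)) (c' : EuclideanSpace ℝ (Fin d) → ℝ),
          (∑ v ∈ 𝒱, c' v = ε) ∧ ((w + ·) '' Rset 𝒱 c = Rset 𝒱 c') ∧
          ∃ c'' : EuclideanSpace ℝ (Fin d) → ℝ, (∑ v ∈ 𝒱, c'' v = 1) ∧
            ((ε⁻¹ • ·) '' Rset 𝒱 c' = Rset 𝒱 c'') ∧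
            volume (Rset 𝒱 c'') = (ENNReal.ofReal ε)⁻¹ ^ d * volume (Rset 𝒱 c)) ∧
    ((∃ c₀ : EuclideanSpace ℝ (Fin d) → ℝ, (∑ v ∈ 𝒱, c₀ v = 1) ∧
        0 < volume (Rset 𝒱 c₀)) →
      (⨆ c ∈ {c : EuclideanSpace ℝ (Fin d) → ℝ | ∑ v ∈ 𝒱, c v = 1},
          volume (Rset 𝒱 c)) = ⊤) := by
  have h𝒱 : ∑ v ∈ 𝒱, v ≠ 0 := hb ▸ hb0
  refine ⟨fun c _ _ ε hε _ => exists_translate_rescale_Rset h𝒱 c hε, ?_⟩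
  rintro ⟨c₀, -, hvol₀⟩
  have hd : d ≠ 0 := by
    rintro rfl
    exact hb0 (Subsingleton.elim b 0)
  rw [iSup₂_eq_top]
  intro M hM
  obtain ⟨ε, hε, -, hM⟩ := ENNReal.exists_lt_inv_ofReal_pow_mul hd hvol₀.ne' hM
  obtain ⟨-, -, -, -, c, hc, -, hvol⟩ := exists_translate_rescale_Rset h𝒱 c₀ hε
  exact ⟨c, hc, hvol ▸ hM⟩
end
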